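/- Let n and ℓ be integers with 3 ≤ ℓ ≤ n−2, and let z : ZMod n → ℝ be injective with u_{{0,ℓ}}(z) < 0 and u_e(z) > 0 for every chord e of length strictly less than ℓ. Set z' = z ∘ τ, where τ ∈ Perm(ZMod n) is the transposition exchanging 1 and ℓ. Then: u_{{0,ℓ}}(z') > 0, u_{{0,ℓ−1}}(z') > 0, u_{{1,ℓ}}(z') > 0; if ℓ ≥ 4 then u_{{1,ℓ−1}}(z') < 0; and for every integer j with 2 ≤ j ≤ ℓ−2: u_{{0,j}}(z') > 0, u_{{j,ℓ}}(z') > 0, u_{{1,j}}(z') > 0 whenever j ≥ 3, and u_{{j,ℓ−1}}(z') > 0 whenever j ≤ ℓ−3. (This is the realized form of the paper's sign computation t(v_{n1}, v_{n ℓ−1}, v_{ℓ1}, v_{ℓ ℓ−1}) = (+,+,+,−) and t(v_{nj}, v_{ℓj}, v_{j ℓ−1}, v_{j1}) = (+,+,+,+).) -/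

import Mathlib

namespace M0n

/-- `{i, j}` is a chord of the `n`-gon: `j ∉ {i-1, i, i+1}`. -/
def IsChord (n : ℕ) (p : Sym2 (ZMod n)) : Prop :=
  ∀ i j : ZMod n, p = s(i, j) → j ≠ i - 1 ∧ j ≠ i ∧ j ≠ i + 1

instance (n : ℕ) [NeZero n] : DecidablePred (IsChord n) := fun p =>
  inferInstanceAs (Decidable (∀ i j : ZMod n, p = s(i, j) → j ≠ i - 1 ∧ j ≠ i ∧ j ≠ i + 1))

/-- The finite set `E` of chords of the `n`-gon. -/
def chords (n : ℕ) [NeZero n] : Finset (Sym2 (ZMod n)) :=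
  Finset.univ.filter (IsChord n)

/-- `x` lies in the cyclic open interval `{i+1, …, j-1}` from `i` to `j`. -/
def CycBtw {n : ℕ} (i x j : ZMod n) : Prop :=
  0 < (x - i).val ∧ (x - i).val < (j - i).val

instance {n : ℕ} (i x j : ZMod n) : Decidable (CycBtw i x j) :=
  inferInstanceAs (Decidable (0 < (x - i).val ∧ (x - i).val < (j - i).val))

/-- Two chords cross: exactly one endpoint of `q` lies in the cyclic open interval
from `i` to `j`, for every ordered representation `(i, j)` of `p`. -/
def Crosses (n : ℕ) (p q : Sym2 (ZMod n)) : Prop :=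
  ∀ i j k l : ZMod n, p = s(i, j) → q = s(k, l) → Xor (CycBtw i k j) (CycBtw i l j)

instance (n : ℕ) [NeZero n] (p q : Sym2 (ZMod n)) : Decidable (Crosses n p q) :=
  inferInstanceAs (Decidable (∀ i j k l : ZMod n,
    p = s(i, j) → q = s(k, l) → Xor (CycBtw i k j) (CycBtw i l j)))

/-- The dihedral coordinate (cross-ratio)
`u_{ij}(z) = ((z i - z (j+1)) (z (i+1) - z j)) / ((z i - z j) (z (i+1) - z (j+1)))`,
well defined on unordered pairs. -/
def u {n : ℕ} {K : Type*} [Field K] (z : ZMod n → K) : Sym2 (ZMod n) → K :=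
  Sym2.lift ⟨fun i j =>
    ((z i - z (j + 1)) * (z (i + 1) - z j)) / ((z i - z j) * (z (i + 1) - z (j + 1))), by
      intro i j
      have h1 : (z i - z (j + 1)) * (z (i + 1) - z j)
          = (z j - z (i + 1)) * (z (j + 1) - z i) := by ring
      have h2 : (z i - z j) * (z (i + 1) - z (j + 1))
          = (z j - z i) * (z (j + 1) - z (i + 1)) := by ring
      dsimp only
      rw [h1, h2]⟩

/-- The cyclic interval `{a, a+1, …, a+m-1}` in `ZMod n`. -/
def cycInt {n : ℕ} (a : ZMod n) (m : ℕ) : Finset (ZMod n) :=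
  (Finset.range m).image fun t : ℕ => a + (t : ZMod n)

/-- A partition of `ZMod n` into four nonempty cyclic intervals `A, B, C, D`
appearing in this cyclic order. -/
structure CyclicFourPartition (n : ℕ) where
  a : ZMod n
  p : ℕ
  q : ℕ
  r : ℕ
  t : ℕ
  hp : 0 < p
  hq : 0 < q
  hr : 0 < r
  ht : 0 < t
  hsum : p + q + r + t = n

namespace CyclicFourPartition

variable {n : ℕ} (P : CyclicFourPartition n)

def A : Finset (ZMod n) := cycInt P.a P.p
def B : Finset (ZMod n) := cycInt (P.a + (P.p : ZMod n)) P.q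
def C : Finset (ZMod n) := cycInt (P.a + (P.p : ZMod n) + (P.q : ZMod n)) P.r
def D : Finset (ZMod n) := cycInt (P.a + (P.p : ZMod n) + (P.q : ZMod n) + (P.r : ZMod n)) P.t

end CyclicFourPartition

/-- A sign pattern is consistent if it does not contradict any extended u-relation:
for every cyclic 4-partition `(A,B,C,D)`, one of the two products of signs is `1`. -/
def Consistent (n : ℕ) (s : Sym2 (ZMod n) → ℤ) : Prop :=
  ∀ P : CyclicFourPartition n,
    (∏ x ∈ P.A, ∏ y ∈ P.C, s s(x, y)) = 1 ∨ (∏ x ∈ P.B, ∏ y ∈ P.D, s s(x, y)) = 1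

/-- A sign pattern is realizable if it is the sign vector of the dihedral coordinates
of some injective real configuration. -/
def Realizable (n : ℕ) [NeZero n] (s : Sym2 (ZMod n) → ℤ) : Prop :=
  ∃ z : ZMod n → ℝ, Function.Injective z ∧ ∀ e ∈ chords n, Real.sign (u z e) = (s e : ℝ)

/-- The length of a chord `{i,j}`: `min (d, n - d)` where `d = (j - i).val`. -/
def chordLength (n : ℕ) (p : Sym2 (ZMod n)) : ℕ :=
  Sym2.lift ⟨fun i j => min (j - i).val (i - j).val, fun _ _ => min_comm _ _⟩ p

/-- `Neg z`: the number of negative chords of a real configuration. -/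
noncomputable def negCount (n : ℕ) [NeZero n] (z : ZMod n → ℝ) : ℕ :=
  Set.ncard {e : Sym2 (ZMod n) | e ∈ chords n ∧ u z e < 0}

/-- The set of real points of `M_{0,n}` in its dihedral embedding:
nowhere-zero real solutions of all primitive u-relations in `ℝ^E`. -/
def Vset (n : ℕ) [NeZero n] : Set ({e : Sym2 (ZMod n) // e ∈ chords n} → ℝ) :=
  {w | (∀ c, w c ≠ 0) ∧ ∀ c,
    w c + ∏ e ∈ Finset.univ.filter
        (fun e : {e : Sym2 (ZMod n) // e ∈ chords n} => Crosses n e.1 c.1), w e = 1}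

/-- The part `M_{0,n}(ℝ_s)` of `V` in the open orthant given by the sign pattern `s`. -/
def VsSet (n : ℕ) [NeZero n] (s : Sym2 (ZMod n) → ℤ) :
    Set ({e : Sym2 (ZMod n) // e ∈ chords n} → ℝ) :=
  {w ∈ Vset n | ∀ c : {e : Sym2 (ZMod n) // e ∈ chords n}, Real.sign (w c) = (s c.1 : ℝ)}

/-!
Write `[a b c d]` for the cross-ratio `(a - d)(b - c) / ((a - c)(b - d))` of `z a, z b, z c, z d`,
so that `u_{ij} = [i, i+1, j, j+1]`. Cross-ratios multiply like ratios in either pair of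
arguments (`[a b c d] [a b d e] = [a b c e]`, `[a b c d] [b e c d] = [a e c d]`), so the positive
short chords make `[a b c d] > 0` whenever `a ≤ b < c ≤ d ≤ a + ℓ`, and together with
`u_{0ℓ} < 0` they make `[0 b c ℓ+1] < 0` for `1 ≤ b < c ≤ ℓ`. After the swap every dihedral
coordinate in question is a cross-ratio of points of `z` which, by the symmetries of the
cross-ratio and `1 - [a b c d] = [a d c b]`, factors into cross-ratios of these two kinds.
-/

section CrossRatio

variable {K : Type*} [Field K]

def crossRatio (a b c d : K) : K := (a - d) * (b - c) / ((a - c) * (b - d))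

theorem u_mk_eq_crossRatio {n : ℕ} (z : ZMod n → K) (i j : ZMod n) :
    u z s(i, j) = crossRatio (z i) (z (i + 1)) (z j) (z (j + 1)) := rfl

variable {a b c d e : K}

theorem crossRatio_reverse : crossRatio d c b a = crossRatio a b c d := by
  unfold crossRatio; ring

theorem crossRatio_swap_pairs : crossRatio c d a b = crossRatio a b c d := by
  unfold crossRatio; ring

theorem crossRatio_swap_within_pairs : crossRatio b a d c = crossRatio a b c d := by
  unfold crossRatio; ring

theorem crossRatio_swap_last : crossRatio a b d c = (crossRatio a b c d)⁻¹ := by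
  unfold crossRatio; rw [inv_div]

theorem crossRatio_self_left (hac : a ≠ c) (had : a ≠ d) : crossRatio a a c d = 1 := by
  unfold crossRatio
  rw [mul_comm, div_self (mul_ne_zero (sub_ne_zero.2 hac) (sub_ne_zero.2 had))]

theorem crossRatio_self_right (hac : a ≠ c) (hbc : b ≠ c) : crossRatio a b c c = 1 :=
  div_self (mul_ne_zero (sub_ne_zero.2 hac) (sub_ne_zero.2 hbc))

theorem crossRatio_mul_crossRatio_left (hbc : b ≠ c) (hbd : b ≠ d) :
    crossRatio a b c d * crossRatio b e c d = crossRatio a e c d := by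
  have := sub_ne_zero.2 hbc
  have := sub_ne_zero.2 hbd
  unfold crossRatio
  field_simp

theorem crossRatio_mul_crossRatio_right (had : a ≠ d) (hbd : b ≠ d) :
    crossRatio a b c d * crossRatio a b d e = crossRatio a b c e := by
  have := sub_ne_zero.2 had
  have := sub_ne_zero.2 hbd
  unfold crossRatio
  field_simp

theorem one_sub_crossRatio (hac : a ≠ c) (hbd : b ≠ d) :
    1 - crossRatio a b c d = crossRatio a d c b := by
  have := sub_ne_zero.2 hac
  have := sub_ne_zero.2 hbd
  unfold crossRatio
  field_simp
  ring

theorem crossRatio_swap_middle (hac : a ≠ c) (hbd : b ≠ d) :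
    crossRatio a c b d = -crossRatio a b c d / (1 - crossRatio a b c d) := by
  have hD : (a - c) * (b - d) ≠ 0 := mul_ne_zero (sub_ne_zero.2 hac) (sub_ne_zero.2 hbd)
  have h1 : 1 - crossRatio a b c d = (a - b) * (c - d) / ((a - c) * (b - d)) := by
    unfold crossRatio; field_simp; ring
  rw [h1, crossRatio, crossRatio, ← neg_div, div_div_div_cancel_right₀ hD]
  ring

theorem ne_and_ne_of_crossRatio_ne_zero (h : crossRatio a b c d ≠ 0) : a ≠ c ∧ b ≠ d := by
  constructor <;> rintro rfl <;> simp [crossRatio] at h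

variable [LinearOrder K] [IsStrictOrderedRing K]

theorem crossRatio_swap_middle_pos_of_neg (h : crossRatio a b c d < 0) :
    0 < crossRatio a c b d := by
  obtain ⟨hac, hbd⟩ := ne_and_ne_of_crossRatio_ne_zero h.ne
  rw [crossRatio_swap_middle hac hbd]
  exact div_pos (neg_pos.2 h) (by linarith)

theorem crossRatio_swap_middle_neg_of_pos_of_lt_one (h0 : 0 < crossRatio a b c d)
    (h1 : crossRatio a b c d < 1) : crossRatio a c b d < 0 := by
  obtain ⟨hac, hbd⟩ := ne_and_ne_of_crossRatio_ne_zero h0.ne'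
  rw [crossRatio_swap_middle hac hbd]
  exact div_neg_of_neg_of_pos (neg_neg_of_pos h0) (by linarith)

end CrossRatio

section Sequence

variable {K : Type*} [Field K] [LinearOrder K] [IsStrictOrderedRing K] {f : ℕ → K} {ℓ : ℕ}

theorem crossRatio_pos_of_span_le (hf : Set.InjOn f (Set.Iic (ℓ + 1)))
    (hpos : ∀ x y, x + 2 ≤ y → y < x + ℓ → y ≤ ℓ →
      0 < crossRatio (f x) (f (x + 1)) (f y) (f (y + 1)))
    {a b c d : ℕ} (hab : a ≤ b) (hbc : b < c) (hcd : c ≤ d) (hda : d ≤ a + ℓ) (hd : d ≤ ℓ + 1) :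
    0 < crossRatio (f a) (f b) (f c) (f d) := by
  have hrow : ∀ a d, a + 1 < c → c ≤ d → d ≤ a + ℓ → d ≤ ℓ + 1 →
      0 < crossRatio (f a) (f (a + 1)) (f c) (f d) := by
    intro a d hac hcd
    induction d, hcd using Nat.le_induction with
    | base =>
      intro _ _
      rw [crossRatio_self_right]
      · exact one_pos
      all_goals exact hf.ne (by grind) (by grind) (by omega)
    | succ d hcd ih =>
      intro h1 h2
      rw [← crossRatio_mul_crossRatio_right (d := f d)]
      · exact mul_pos (ih (by omega) (by omega)) (hpos a d (by omega) (by omega) (by omega))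
      all_goals exact hf.ne (by grind) (by grind) (by omega)
  induction b, hab using Nat.le_induction with
  | base =>
    rw [crossRatio_self_left]
    · exact one_pos
    all_goals exact hf.ne (by grind) (by grind) (by omega)
  | succ b hab ih =>
    rw [← crossRatio_mul_crossRatio_left (b := f b)]
    · exact mul_pos (ih (by omega)) (hrow b d (by omega) hcd (by omega) hd)
    all_goals exact hf.ne (by grind) (by grind) (by omega)

structure IsShortestNegChord (f : ℕ → K) (ℓ : ℕ) : Prop where
  injOn : Set.InjOn f (Set.Iic (ℓ + 1))
  pos : ∀ x y, x + 2 ≤ y → y < x + ℓ → y ≤ ℓ →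
    0 < crossRatio (f x) (f (x + 1)) (f y) (f (y + 1))
  neg : crossRatio (f 0) (f 1) (f ℓ) (f (ℓ + 1)) < 0

namespace IsShortestNegChord

theorem crossRatio_zero_inner_ell_succ_neg (h : IsShortestNegChord f ℓ) {b c : ℕ} (hb : 1 ≤ b)
    (hbc : b < c) (hc : c ≤ ℓ) : crossRatio (f 0) (f b) (f c) (f (ℓ + 1)) < 0 := by
  rw [← crossRatio_mul_crossRatio_left (b := f 1), ← crossRatio_mul_crossRatio_right (d := f ℓ)]
  · refine mul_neg_of_neg_of_pos (mul_neg_of_pos_of_neg ?_ h.neg) ?_ <;>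
      exact crossRatio_pos_of_span_le h.injOn h.pos (by omega) (by omega) (by omega) (by omega)
        (by omega)
  all_goals exact h.injOn.ne (by grind) (by grind) (by omega)

theorem crossRatio_zero_ell_succ_inner_pos (h : IsShortestNegChord f ℓ) {b c : ℕ} (hb : 1 ≤ b)
    (hbc : b < c) (hc : c ≤ ℓ) : 0 < crossRatio (f 0) (f (ℓ + 1)) (f c) (f b) := by
  rw [← one_sub_crossRatio]
  · linarith [h.crossRatio_zero_inner_ell_succ_neg hb hbc hc]
  all_goals exact h.injOn.ne (by grind) (by grind) (by omega)

theorem crossRatio_adjacent_pos (h : IsShortestNegChord f ℓ) {j x y : ℕ} (hj : 1 ≤ j)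
    (hjℓ : j < ℓ) (hx : x ≤ ℓ + 1) (hxj : x ≠ j) (hxj' : x ≠ j + 1)
    (hy : y ≤ ℓ + 1) (hyj : y ≠ j) (hyj' : y ≠ j + 1) :
    0 < crossRatio (f x) (f y) (f j) (f (j + 1)) := by
  -- `[0 x j (j+1)] > 0` for `x` on either side of `j`: directly below it, through `ℓ + 1` above it.
  have hzero : ∀ x, x ≤ ℓ + 1 → x ≠ j → x ≠ j + 1 →
      0 < crossRatio (f 0) (f x) (f j) (f (j + 1)) := by
    intro x hx hxj hxj'
    rcases lt_or_gt_of_ne hxj with hlt | hgt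
    · exact crossRatio_pos_of_span_le h.injOn h.pos (by omega) hlt (by omega) (by omega) (by omega)
    rw [← crossRatio_mul_crossRatio_left (b := f (ℓ + 1)), crossRatio_swap_last (c := f (j + 1)),
      crossRatio_swap_pairs (a := f j), crossRatio_swap_last (c := f x)]
    · exact mul_pos (inv_pos.2 (h.crossRatio_zero_ell_succ_inner_pos hj j.lt_succ_self (by omega)))
        (inv_pos.2 (crossRatio_pos_of_span_le h.injOn h.pos (by omega) (by omega) (by omega)
          (by omega) le_rfl))
    all_goals exact h.injOn.ne (by grind) (by grind) (by omega)
  rw [← crossRatio_mul_crossRatio_left (b := f 0), crossRatio_swap_within_pairs (a := f 0),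
    crossRatio_swap_last (a := f 0) (b := f x)]
  · exact mul_pos (inv_pos.2 (hzero x hx hxj hxj')) (hzero y hy hyj hyj')
  all_goals exact h.injOn.ne (by grind) (by grind) (by omega)

theorem crossRatio_zero_ell_pred_one_pos (h : IsShortestNegChord f ℓ) (hℓ : 3 ≤ ℓ) :
    0 < crossRatio (f 0) (f ℓ) (f (ℓ - 1)) (f 1) := by
  rw [← crossRatio_mul_crossRatio_left (b := f (ℓ + 1)),
    crossRatio_reverse (a := f 1) (d := f (ℓ + 1))]
  · exact mul_pos (h.crossRatio_zero_ell_succ_inner_pos le_rfl (by omega) (by omega))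
      (crossRatio_pos_of_span_le h.injOn h.pos (by omega) (by omega) (by omega) (by omega) le_rfl)
  all_goals exact h.injOn.ne (by grind) (by grind) (by omega)

theorem crossRatio_ell_two_one_succ_pos (h : IsShortestNegChord f ℓ) (hℓ : 3 ≤ ℓ) :
    0 < crossRatio (f ℓ) (f 2) (f 1) (f (ℓ + 1)) := by
  rw [crossRatio_swap_pairs, ← crossRatio_mul_crossRatio_left (b := f 0),
    crossRatio_swap_within_pairs (a := f 0)]
  · exact mul_pos
      (crossRatio_pos_of_span_le h.injOn h.pos (by omega) (by omega) (by omega) (by omega)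
        (by omega))
      (h.crossRatio_zero_ell_succ_inner_pos (by omega) (by omega) le_rfl)
  all_goals exact h.injOn.ne (by grind) (by grind) (by omega)

theorem crossRatio_ell_two_pred_one_neg (h : IsShortestNegChord f ℓ) (hℓ : 4 ≤ ℓ) :
    crossRatio (f ℓ) (f 2) (f (ℓ - 1)) (f 1) < 0 := by
  rw [← crossRatio_reverse]
  refine crossRatio_swap_middle_neg_of_pos_of_lt_one
    (crossRatio_pos_of_span_le h.injOn h.pos (by omega) (by omega) (by omega) (by omega)
      (by omega))
    (sub_pos.1 ?_)
  rw [one_sub_crossRatio, ← crossRatio_mul_crossRatio_left (b := f 0),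
    ← crossRatio_mul_crossRatio_left (a := f 0) (b := f (ℓ + 1)),
    crossRatio_swap_within_pairs (a := f 0), crossRatio_reverse (a := f 2) (d := f (ℓ + 1))]
  · exact mul_pos
      (crossRatio_pos_of_span_le h.injOn h.pos (by omega) (by omega) (by omega) (by omega)
        (by omega))
      (mul_pos (h.crossRatio_zero_ell_succ_inner_pos (by omega) (by omega) (by omega))
        (crossRatio_pos_of_span_le h.injOn h.pos (by omega) (by omega) (by omega) (by omega)
          le_rfl))
  all_goals exact h.injOn.ne (by grind) (by grind) (by omega)

end IsShortestNegChord

end Sequence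

section Polygon

variable {n : ℕ}

theorem natCast_injOn_Iio : Set.InjOn (Nat.cast : ℕ → ZMod n) (Set.Iio n) :=
  fun x hx y hy hxy => by
  simpa [ZMod.val_natCast_of_lt hx, ZMod.val_natCast_of_lt hy] using congrArg ZMod.val hxy

theorem natCast_mem_chords [NeZero n] {x y : ℕ} (hxy : x + 2 ≤ y) (hy : y + 2 ≤ n) :
    s((x : ZMod n), (y : ZMod n)) ∈ chords n := by
  have hcast : ∀ {p q : ℕ}, p < n → q < n → ((p : ZMod n) = q ↔ p = q) :=
    fun hp hq => natCast_injOn_Iio.eq_iff hp hq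
  simp only [chords, Finset.mem_filter, Finset.mem_univ, true_and, IsChord, Sym2.eq_iff]
  rintro i j (⟨rfl, rfl⟩ | ⟨rfl, rfl⟩) <;>
    simp (disch := omega) only [ne_eq, eq_sub_iff_add_eq, ← Nat.cast_succ, hcast] <;> omega

theorem chordLength_natCast_le {x y : ℕ} (hxy : x ≤ y) (hyx : y - x < n) :
    chordLength n s((x : ZMod n), (y : ZMod n)) ≤ y - x :=
  (min_le_left _ _).trans (by rw [← Nat.cast_sub hxy, ZMod.val_natCast_of_lt hyx])

theorem natCast_swap_apply {a b k : ℕ} (ha : a < n) (hb : b < n) (hk : k < n) :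
    Equiv.swap (a : ZMod n) b k = (Equiv.swap a b k : ℕ) := by
  simp only [Equiv.swap_apply_def, natCast_injOn_Iio.eq_iff hk ha, natCast_injOn_Iio.eq_iff hk hb]
  split_ifs <;> rfl

theorem u_comp_swap_natCast {K : Type*} [Field K] (z : ZMod n → K) {a b i j : ℕ} (ha : a < n)
    (hb : b < n) (hi : i + 1 < n) (hj : j + 1 < n) :
    u (fun k => z (Equiv.swap (a : ZMod n) b k)) s((i : ZMod n), (j : ZMod n)) =
      crossRatio (z (Equiv.swap a b i : ℕ)) (z (Equiv.swap a b (i + 1) : ℕ))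
        (z (Equiv.swap a b j : ℕ)) (z (Equiv.swap a b (j + 1) : ℕ)) := by
  rw [u_mk_eq_crossRatio, ← Nat.cast_succ, ← Nat.cast_succ, natCast_swap_apply ha hb (by omega),
    natCast_swap_apply ha hb hi, natCast_swap_apply ha hb (by omega), natCast_swap_apply ha hb hj]

theorem isShortestNegChord_natCast {K : Type*} [Field K] [LinearOrder K] [IsStrictOrderedRing K]
    [NeZero n] {ℓ : ℕ} (hℓn : ℓ + 2 ≤ n) {z : ZMod n → K}
    (hz : Function.Injective z) (hneg : u z s((0 : ZMod n), (ℓ : ZMod n)) < 0)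
    (hshort : ∀ e ∈ chords n, chordLength n e < ℓ → 0 < u z e) :
    IsShortestNegChord (fun k : ℕ => z k) ℓ where
  injOn := hz.comp_injOn (natCast_injOn_Iio.mono fun k hk => by simp at hk ⊢; omega)
  pos x y hxy hyx hy := by
    have := hshort _ (natCast_mem_chords hxy (by omega))
      ((chordLength_natCast_le (by omega) (by omega)).trans_lt (by omega))
    rwa [u_mk_eq_crossRatio, ← Nat.cast_succ, ← Nat.cast_succ] at this
  neg := by
    rwa [u_mk_eq_crossRatio, zero_add, ← Nat.cast_succ, ← Nat.cast_zero, ← Nat.cast_one] at hneg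

end Polygon

/-- Sign computation for the swap of the labels `1` and `ℓ`, for an
injective `z : ZMod n → ℝ` whose shortest negative chord is `{0, ℓ}`. -/
theorem signs_after_swap_one_ell (n ℓ : ℕ) [NeZero n] (hl3 : 3 ≤ ℓ) (hln : ℓ ≤ n - 2)
    (z : ZMod n → ℝ) (hz : Function.Injective z)
    (hneg : u z s((0 : ZMod n), (ℓ : ZMod n)) < 0)
    (hshort : ∀ e ∈ chords n, chordLength n e < ℓ → 0 < u z e) :
    ∀ z' : ZMod n → ℝ, z' = (fun k => z (Equiv.swap (1 : ZMod n) (ℓ : ZMod n) k)) →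
      (0 < u z' s((0 : ZMod n), (ℓ : ZMod n))) ∧
      (0 < u z' s((0 : ZMod n), (ℓ : ZMod n) - 1)) ∧
      (0 < u z' s((1 : ZMod n), (ℓ : ZMod n))) ∧
      (4 ≤ ℓ → u z' s((1 : ZMod n), (ℓ : ZMod n) - 1) < 0) ∧
      (∀ j : ℕ, 2 ≤ j → j ≤ ℓ - 2 →
        0 < u z' s((0 : ZMod n), (j : ZMod n)) ∧
        0 < u z' s((j : ZMod n), (ℓ : ZMod n)) ∧
        (3 ≤ j → 0 < u z' s((1 : ZMod n), (j : ZMod n))) ∧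
        (j ≤ ℓ - 3 → 0 < u z' s((j : ZMod n), (ℓ : ZMod n) - 1))) := by
  rintro z' rfl
  have h := isShortestNegChord_natCast (by omega) hz hneg hshort
  have hswap {i j : ℕ} (hi : i ≤ ℓ) (hj : j ≤ ℓ) :=
    u_comp_swap_natCast z (a := 1) (b := ℓ) (i := i) (j := j) (by omega) (by omega) (by omega)
      (by omega)
  rw [← Nat.cast_pred (by omega), show (0 : ZMod n) = (0 : ℕ) from Nat.cast_zero.symm,
    show (1 : ZMod n) = (1 : ℕ) from Nat.cast_one.symm]
  refine ⟨?_, ?_, ?_, fun hl4 => ?_, fun j hj2 hjl => ⟨?_, ?_, fun hj3 => ?_, fun hjl3 => ?_⟩⟩ <;>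
    rw [hswap (by omega) (by omega)] <;>
    simp (disch := omega) only [Equiv.swap_apply_def, if_true, if_neg, zero_add, Nat.sub_add_cancel]
  · exact crossRatio_swap_middle_pos_of_neg h.neg
  · exact h.crossRatio_zero_ell_pred_one_pos hl3
  · exact h.crossRatio_ell_two_one_succ_pos hl3
  · exact h.crossRatio_ell_two_pred_one_neg hl4
  all_goals
    try rw [crossRatio_swap_pairs (c := z j)]
    exact h.crossRatio_adjacent_pos (by omega) (by omega) (by omega) (by omega) (by omega)
      (by omega) (by omega) (by omega)

end M0n
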